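/- arXiv:1007.4633 — 4 statements merged into one kernel-verified Lean document; each statement's English description precedes it below -/
import Mathlib

section
/- For every real a > 0, the limit as ε ↓ 0 of (∫_ε^∞ e^{-a u} u^{-1} du + log ε) equals -γ - log a, where γ is the Euler–Mascheroni constant. -/
open Real Filter Set
open MeasureTheory

lemma lemA : ∫ t in Ioi (0:ℝ), Real.log t * Real.exp (-t) = -Real.eulerMascheroniConstant := by
  have h1 := Complex.hasDerivAt_GammaIntegral (s := 1) (by simp)
  have hc : (∫ t : ℝ in Ioi 0, (t:ℂ) ^ ((1:ℂ) - 1) * (Real.log t * Real.exp (-t)))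
      = ((∫ t : ℝ in Ioi 0, Real.log t * Real.exp (-t) : ℝ) : ℂ) := by
    calc (∫ t : ℝ in Ioi 0, (t:ℂ) ^ ((1:ℂ) - 1) * (Real.log t * Real.exp (-t)))
        = ∫ t : ℝ in Ioi 0, ((Real.log t * Real.exp (-t) : ℝ) : ℂ) := by
          refine setIntegral_congr_fun measurableSet_Ioi fun t _ => ?_
          push_cast
          simp
      _ = _ := integral_ofReal
  rw [hc] at h1
  have h2 : Complex.Gamma =ᶠ[nhds (1:ℂ)] Complex.GammaIntegral := by
    filter_upwards [(isOpen_lt continuous_const Complex.continuous_re).mem_nhds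
      (by norm_num : (0:ℝ) < (1:ℂ).re)] with s hs
    exact Complex.Gamma_eq_integral hs
  have h3 : HasDerivAt Complex.Gamma
      ((∫ t : ℝ in Ioi 0, Real.log t * Real.exp (-t) : ℝ) : ℂ) 1 :=
    h1.congr_of_eventuallyEq h2
  have h4 := h3.real_of_complex
  have h5 : HasDerivAt Real.Gamma
      (((∫ t : ℝ in Ioi 0, Real.log t * Real.exp (-t) : ℝ) : ℂ)).re 1 := by
    refine h4.congr_of_eventuallyEq ?_
    filter_upwards with x
    rw [Complex.Gamma_ofReal, Complex.ofReal_re]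
  simpa using h5.unique Real.hasDerivAt_Gamma_one

lemma int_log_exp : IntegrableOn (fun t => Real.log t * Real.exp (-t)) (Ioi (0:ℝ)) := by
  have h1 : IntegrableOn (fun t : ℝ => t ^ ((1:ℝ)/2) * Real.exp (-t)) (Ioi 0) := by
    have := integrableOn_rpow_mul_exp_neg_rpow (by norm_num : (-1:ℝ) < 1/2) (one_pos : (0:ℝ) < 1)
    refine this.congr_fun (fun t ht => by simp only [Real.rpow_one]) measurableSet_Ioi
  have h2 : IntegrableOn (fun t : ℝ => t ^ (-(1:ℝ)/2) * Real.exp (-t)) (Ioi 0) := by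
    have := integrableOn_rpow_mul_exp_neg_rpow (by norm_num : (-1:ℝ) < -1/2) (one_pos : (0:ℝ) < 1)
    refine this.congr_fun (fun t ht => by simp only [Real.rpow_one]) measurableSet_Ioi
  have hmaj : IntegrableOn
      (fun t : ℝ => 2 * (t ^ ((1:ℝ)/2) * Real.exp (-t)) + 2 * (t ^ (-(1:ℝ)/2) * Real.exp (-t)))
      (Ioi 0) := (h1.const_mul 2).add (h2.const_mul 2)
  refine Integrable.mono hmaj ?_ ?_
  · exact (Real.measurable_log.mul (Real.measurable_exp.comp measurable_neg)).aestronglyMeasurable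
  · rw [ae_restrict_iff' measurableSet_Ioi]
    filter_upwards with t ht
    have ht0 : (0:ℝ) < t := ht
    have hexp : 0 ≤ Real.exp (-t) := (Real.exp_pos _).le
    have hlog : |Real.log t| ≤ 2 * t ^ ((1:ℝ)/2) + 2 * t ^ (-(1:ℝ)/2) := by
      have hb1 : Real.log t ≤ t ^ ((1:ℝ)/2) / (1/2) := Real.log_le_rpow_div ht0.le (by norm_num)
      have hb2 : Real.log t⁻¹ ≤ (t⁻¹) ^ ((1:ℝ)/2) / (1/2) :=
        Real.log_le_rpow_div (inv_nonneg.mpr ht0.le) (by norm_num)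
      have hrw : (t⁻¹) ^ ((1:ℝ)/2) = t ^ (-(1:ℝ)/2) := by
        rw [show (-(1:ℝ)/2) = -((1:ℝ)/2) by norm_num, Real.rpow_neg ht0.le,
          ← Real.inv_rpow ht0.le]
      rw [Real.log_inv, hrw] at hb2
      have e1 : Real.log t ≤ 2 * t ^ ((1:ℝ)/2) := by
        rw [show (2:ℝ) * t ^ ((1:ℝ)/2) = t ^ ((1:ℝ)/2) / (1/2) by ring]; exact hb1
      have e2 : -Real.log t ≤ 2 * t ^ (-(1:ℝ)/2) := by
        rw [show (2:ℝ) * t ^ (-(1:ℝ)/2) = t ^ (-(1:ℝ)/2) / (1/2) by ring]; exact hb2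
      have hp1 : 0 ≤ t ^ ((1:ℝ)/2) := Real.rpow_nonneg ht0.le _
      have hp2 : 0 ≤ t ^ (-(1:ℝ)/2) := Real.rpow_nonneg ht0.le _
      rw [abs_le]
      constructor <;> nlinarith
    rw [Real.norm_eq_abs, Real.norm_eq_abs, abs_mul, abs_of_nonneg hexp]
    rw [abs_of_nonneg (show (0:ℝ) ≤ 2 * (t ^ ((1:ℝ)/2) * Real.exp (-t))
      + 2 * (t ^ (-(1:ℝ)/2) * Real.exp (-t)) by positivity)]
    have h3 : |Real.log t| * Real.exp (-t) ≤ (2 * t ^ ((1:ℝ)/2) + 2 * t ^ (-(1:ℝ)/2)) * Real.exp (-t) :=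
      mul_le_mul_of_nonneg_right hlog hexp
    refine h3.trans (le_of_eq ?_)
    ring

lemma int_exp_div {δ : ℝ} (hδ : 0 < δ) :
    IntegrableOn (fun v => Real.exp (-v) / v) (Ioi δ) := by
  have h1 : IntegrableOn (fun v : ℝ => δ⁻¹ * Real.exp (-1 * v)) (Ioi δ) :=
    (exp_neg_integrableOn_Ioi δ one_pos).const_mul _
  refine Integrable.mono h1 ?_ ?_
  · refine ((Real.measurable_exp.comp measurable_neg).div measurable_id).aestronglyMeasurable
  · rw [ae_restrict_iff' measurableSet_Ioi]
    filter_upwards with v hv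
    have hv0 : δ < v := hv
    have h0v : 0 < v := hδ.trans hv0
    rw [Real.norm_eq_abs, Real.norm_eq_abs, abs_of_nonneg (by positivity),
      abs_of_nonneg (by positivity), neg_one_mul]
    rw [div_le_iff₀ h0v]
    rw [mul_comm δ⁻¹, mul_assoc]
    refine le_mul_of_one_le_right (Real.exp_pos _).le ?_
    rw [← div_eq_inv_mul, le_div_iff₀ hδ]
    linarith

lemma keyH : Tendsto (fun δ : ℝ => (∫ v in Ioi δ, Real.exp (-v) / v) + Real.log δ)
    (nhdsWithin 0 (Ioi 0)) (nhds (-Real.eulerMascheroniConstant)) := by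
  have key : ∀ δ : ℝ, 0 < δ →
      (∫ v in Ioi δ, Real.exp (-v) / v)
        = -(Real.exp (-δ) * Real.log δ) + ∫ v in Ioi δ, Real.log v * Real.exp (-v) := by
    intro δ hδ
    set F : ℝ → ℝ := fun v => Real.exp (-v) * Real.log v with hF
    set F' : ℝ → ℝ := fun v => Real.exp (-v) * v⁻¹ - Real.exp (-v) * Real.log v with hF'
    have hderiv : ∀ v ∈ Ici δ, HasDerivAt F (F' v) v := by
      intro v hv
      have hv0 : 0 < v := hδ.trans_le hv
      have he : HasDerivAt (fun v : ℝ => Real.exp (-v)) (-Real.exp (-v)) v := by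
        simpa [Function.comp_def] using ((Real.hasDerivAt_exp (-v)).comp v ((hasDerivAt_id v).neg))
      have := he.mul (Real.hasDerivAt_log hv0.ne')
      refine this.congr_deriv ?_
      simp only [hF']
      ring
    have hint_le : IntegrableOn (fun v => Real.log v * Real.exp (-v)) (Ioi δ) :=
      int_log_exp.mono_set (Ioi_subset_Ioi hδ.le)
    have hf'int : IntegrableOn F' (Ioi δ) := by
      have : IntegrableOn (fun v => Real.exp (-v) * v⁻¹) (Ioi δ) :=
        (int_exp_div hδ).congr_fun (fun v hv => div_eq_mul_inv _ _) measurableSet_Ioi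
      refine this.sub (hint_le.congr_fun (fun v hv => by ring) measurableSet_Ioi)
    have htop : Tendsto F atTop (nhds 0) := by
      have hb : Tendsto (fun v : ℝ => v * Real.exp (-v)) atTop (nhds 0) := by
        simpa using tendsto_pow_mul_exp_neg_atTop_nhds_zero 1
      have hbneg : Tendsto (fun v : ℝ => -(v * Real.exp (-v))) atTop (nhds 0) := by
        simpa using hb.neg
      refine tendsto_of_tendsto_of_tendsto_of_le_of_le' hbneg hb ?_ ?_
      · filter_upwards [eventually_ge_atTop (1:ℝ)] with v hv
        have : Real.log v ≤ v := (Real.log_le_sub_one_of_pos (by linarith)).trans (by linarith)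
        have h0 : 0 ≤ Real.log v := Real.log_nonneg hv
        have := Real.exp_pos (-v)
        simp only [hF]
        nlinarith
      · filter_upwards [eventually_ge_atTop (1:ℝ)] with v hv
        have : Real.log v ≤ v := (Real.log_le_sub_one_of_pos (by linarith)).trans (by linarith)
        have := Real.exp_pos (-v)
        simp only [hF]
        nlinarith
    have hparts := integral_Ioi_of_hasDerivAt_of_tendsto' hderiv hf'int htop
    have hsplit : (∫ v in Ioi δ, Real.exp (-v) / v)
        = (∫ v in Ioi δ, F' v) + ∫ v in Ioi δ, Real.log v * Real.exp (-v) := by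
      rw [← integral_add hf'int hint_le]
      refine setIntegral_congr_fun measurableSet_Ioi fun v hv => ?_
      simp only [hF']
      field_simp
      ring
    rw [hsplit, hparts]
    simp only [hF]
    ring
  have hI : Tendsto (fun δ : ℝ => ∫ v in Ioi δ, Real.log v * Real.exp (-v))
      (nhdsWithin 0 (Ioi 0)) (nhds (-Real.eulerMascheroniConstant)) := by
    have hμ : Tendsto (fun δ : ℝ => (volume.restrict (Ioi (0:ℝ))) (Ioc 0 δ))
        (nhdsWithin 0 (Ioi 0)) (nhds 0) := by
      have h1 : ∀ δ : ℝ, (volume.restrict (Ioi (0:ℝ))) (Ioc 0 δ) = ENNReal.ofReal δ := by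
        intro δ
        rw [Measure.restrict_apply measurableSet_Ioc]
        rw [inter_eq_left.mpr Ioc_subset_Ioi_self]
        simp [Real.volume_Ioc]
      simp_rw [h1]
      have : Tendsto (fun δ : ℝ => δ) (nhdsWithin 0 (Ioi 0)) (nhds 0) :=
        tendsto_id.mono_left nhdsWithin_le_nhds
      simpa [Function.comp_def] using (ENNReal.continuous_ofReal.tendsto 0).comp this
    have h0 := int_log_exp.tendsto_setIntegral_nhds_zero hμ
    have h0' : Tendsto (fun δ : ℝ => ∫ v in Ioc 0 δ, Real.log v * Real.exp (-v))
        (nhdsWithin 0 (Ioi 0)) (nhds 0) := by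
      refine h0.congr fun δ => ?_
      rw [Measure.restrict_restrict measurableSet_Ioc, inter_eq_left.mpr Ioc_subset_Ioi_self]
    have heq : ∀ δ : ℝ, 0 < δ →
        (∫ v in Ioi δ, Real.log v * Real.exp (-v))
          = -Real.eulerMascheroniConstant
            - ∫ v in Ioc 0 δ, Real.log v * Real.exp (-v) := by
      intro δ hδ
      have hsplit : (∫ v in Ioi (0:ℝ), Real.log v * Real.exp (-v))
          = (∫ v in Ioc 0 δ, Real.log v * Real.exp (-v))
            + ∫ v in Ioi δ, Real.log v * Real.exp (-v) := by
        rw [← setIntegral_union (Ioc_disjoint_Ioi le_rfl) measurableSet_Ioi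
          (int_log_exp.mono_set Ioc_subset_Ioi_self) (int_log_exp.mono_set (Ioi_subset_Ioi hδ.le)),
          Ioc_union_Ioi_eq_Ioi hδ.le]
      rw [← lemA]
      linarith
    have := (tendsto_const_nhds : Tendsto (fun _ : ℝ => -Real.eulerMascheroniConstant)
      (nhdsWithin 0 (Ioi 0)) (nhds (-Real.eulerMascheroniConstant))).sub h0'
    rw [sub_zero] at this
    refine this.congr' ?_
    filter_upwards [self_mem_nhdsWithin] with δ hδ
    rw [heq δ hδ]
  have hlogpart : Tendsto (fun δ : ℝ => Real.log δ * (1 - Real.exp (-δ)))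
      (nhdsWithin 0 (Ioi 0)) (nhds 0) := by
    have hlower : Tendsto (fun δ : ℝ => Real.log δ * δ) (nhdsWithin 0 (Ioi 0)) (nhds 0) := by
      have := tendsto_log_mul_rpow_nhdsGT_zero one_pos
      simpa using this
    refine tendsto_of_tendsto_of_tendsto_of_le_of_le' hlower tendsto_const_nhds ?_ ?_
    · filter_upwards [self_mem_nhdsWithin,
        (eventually_lt_nhds one_pos).filter_mono nhdsWithin_le_nhds] with δ hδ hδ1
      have hδ0 : (0:ℝ) < δ := hδ
      have hlog : Real.log δ ≤ 0 := Real.log_nonpos hδ0.le hδ1.le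
      have h1 : 1 - Real.exp (-δ) ≤ δ := by nlinarith [Real.add_one_le_exp (-δ)]
      nlinarith
    · filter_upwards [self_mem_nhdsWithin,
        (eventually_lt_nhds one_pos).filter_mono nhdsWithin_le_nhds] with δ hδ hδ1
      have hδ0 : (0:ℝ) < δ := hδ
      have hlog : Real.log δ ≤ 0 := Real.log_nonpos hδ0.le hδ1.le
      have h2 : Real.exp (-δ) ≤ 1 := Real.exp_le_one_iff.mpr (by linarith)
      nlinarith
  have := hlogpart.add hI
  rw [zero_add] at this
  refine this.congr' ?_
  filter_upwards [self_mem_nhdsWithin] with δ hδ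
  rw [key δ hδ]
  ring

theorem stmt0 (a : ℝ) (ha : 0 < a) :
    Tendsto (fun ε : ℝ => (∫ u in Set.Ioi ε, Real.exp (-a * u) / u) + Real.log ε)
      (nhdsWithin 0 (Set.Ioi 0))
      (nhds (-Real.eulerMascheroniConstant - Real.log a)) := by
  have hmap : Tendsto (fun ε : ℝ => a * ε) (nhdsWithin 0 (Ioi 0)) (nhdsWithin 0 (Ioi 0)) := by
    refine tendsto_nhdsWithin_of_tendsto_nhds_of_eventually_within _ ?_ ?_
    · have : Tendsto (fun ε : ℝ => a * ε) (nhds 0) (nhds (a * 0)) :=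
        (continuous_const.mul continuous_id).tendsto 0
      rw [mul_zero] at this
      exact this.mono_left nhdsWithin_le_nhds
    · filter_upwards [self_mem_nhdsWithin] with ε hε
      exact mul_pos ha hε
  have hcomp := keyH.comp hmap
  have := hcomp.sub_const (Real.log a)
  refine this.congr' ?_
  filter_upwards [self_mem_nhdsWithin] with ε hε
  have hε0 : (0:ℝ) < ε := hε
  have hsub : (∫ u in Ioi ε, Real.exp (-a * u) / u) = ∫ v in Ioi (a * ε), Real.exp (-v) / v := by
    have h1 : (∫ u in Ioi ε, Real.exp (-a * u) / u)
        = ∫ u in Ioi ε, a • (Real.exp (-(a * u)) / (a * u)) := by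
      refine setIntegral_congr_fun measurableSet_Ioi fun u hu => ?_
      have hu0 : (0:ℝ) < u := hε0.trans hu
      rw [smul_eq_mul, neg_mul]
      field_simp
    rw [h1, integral_smul, integral_comp_mul_left_Ioi (fun v => Real.exp (-v) / v) ε ha,
      smul_smul, mul_inv_cancel₀ ha.ne', one_smul]
  rw [Function.comp_apply, hsub, Real.log_mul ha.ne' hε0.ne']
  ring
end

section
/- The integral ∫_0^∞ (log u)² e^{-u} du equals π²/6 + γ². -/
open Complex Set MeasureTheory Filter Asymptotics
open scoped Topology Real

noncomputable section
set_option maxHeartbeats 1000000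


private def f0 : ℝ → ℂ := fun t => ↑(Real.exp (-t))
private def f1 : ℝ → ℂ := fun t => Real.log t • f0 t
private def f2 : ℝ → ℂ := fun t => Real.log t • f1 t

private lemma hf0c : LocallyIntegrableOn f0 (Ioi 0) :=
  ((continuous_ofReal.comp (Real.continuous_exp.comp continuous_neg)).continuousOn).locallyIntegrableOn
    measurableSet_Ioi

private lemma hf0top : f0 =O[atTop] (fun t : ℝ => t ^ (-(3:ℝ))) := by
  rw [← isBigO_norm_left]
  simp_rw [f0, Complex.norm_real, isBigO_norm_left]
  simpa only [neg_one_mul] using (isLittleO_exp_neg_mul_rpow_atTop zero_lt_one _).isBigO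

private lemma hf0bot : f0 =O[𝓝[>] (0:ℝ)] (fun t : ℝ => t ^ (-(0:ℝ))) := by
  simp_rw [neg_zero, Real.rpow_zero]
  refine isBigO_const_of_tendsto (?_ : Tendsto _ _ (𝓝 (1 : ℂ))) one_ne_zero
  rw [(by simp : (1 : ℂ) = ↑(Real.exp (-0)))]
  exact (continuous_ofReal.comp (Real.continuous_exp.comp continuous_neg)).continuousWithinAt

private lemma hf1c : LocallyIntegrableOn f1 (Ioi 0) := by
  refine ContinuousOn.locallyIntegrableOn ?_ measurableSet_Ioi
  exact (Real.continuousOn_log.mono (fun x hx => ne_of_gt hx)).smul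
    ((continuous_ofReal.comp (Real.continuous_exp.comp continuous_neg)).continuousOn)

private lemma hf1top : f1 =O[atTop] (fun t : ℝ => t ^ (-(2:ℝ))) :=
  isBigO_rpow_top_log_smul (by norm_num) hf0top

private lemma hf1bot : f1 =O[𝓝[>] (0:ℝ)] (fun t : ℝ => t ^ (-(1/2:ℝ))) :=
  isBigO_rpow_zero_log_smul (by norm_num) hf0bot

private lemma deriv_Gamma_eq_mellin {s : ℂ} (hs : 0 < s.re) (hs3 : s.re < 3) :
    deriv Complex.Gamma s = mellin f1 s := by
  have h := (mellin_hasDerivAt_of_isBigO_rpow hf0c hf0top hs3 hf0bot hs).2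
  have he : mellin f0 =ᶠ[𝓝 s] Complex.Gamma := by
    filter_upwards [(isOpen_lt continuous_const continuous_re).mem_nhds hs] with z hz
    rw [show mellin f0 z = Complex.GammaIntegral z from
      (congrFun Complex.GammaIntegral_eq_mellin z).symm, ← Complex.Gamma_eq_integral hz]
  have := (h.congr_of_eventuallyEq he.symm).deriv
  exact this.trans rfl

private lemma hasDerivAt_deriv_Gamma_one :
    HasDerivAt (deriv Complex.Gamma) (mellin f2 1) 1 := by
  have h := (mellin_hasDerivAt_of_isBigO_rpow hf1c hf1top
    (by norm_num : (1:ℂ).re < 2) hf1bot (by norm_num : (1/2:ℝ) < (1:ℂ).re)).2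
  refine h.congr_of_eventuallyEq ?_
  have hmem : {z : ℂ | 0 < z.re ∧ z.re < 3} ∈ 𝓝 (1:ℂ) := by
    refine ((isOpen_lt continuous_const continuous_re).inter
      (isOpen_lt continuous_re continuous_const)).mem_nhds (by norm_num)
  filter_upwards [hmem] with z hz
  exact deriv_Gamma_eq_mellin hz.1 hz.2

private lemma mellin_f2_one :
    mellin f2 1 = ↑(∫ u in Ioi (0:ℝ), (Real.log u) ^ 2 * Real.exp (-u)) := by
  have hc : ∀ t ∈ Ioi (0:ℝ), (t:ℂ) ^ ((1:ℂ) - 1) • f2 t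
      = ((Real.log t ^ 2 * Real.exp (-t) : ℝ) : ℂ) := by
    intro t ht
    simp only [f2, f1, f0, sub_self, Complex.cpow_zero, one_smul, Complex.real_smul,
      Complex.ofReal_mul, Complex.ofReal_pow]
    ring
  rw [mellin, setIntegral_congr_fun measurableSet_Ioi hc]
  exact integral_ofReal



private lemma analyticOnNhd_Gamma : AnalyticOnNhd ℂ Complex.Gamma {z : ℂ | 0 < z.re} := by
  refine DifferentiableOn.analyticOnNhd (fun z hz => ?_) (isOpen_lt continuous_const continuous_re)
  refine (Complex.differentiableAt_Gamma z (fun m hm => ?_)).differentiableWithinAt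
  rw [hm] at hz
  simp only [mem_setOf_eq, Complex.neg_re, Complex.natCast_re] at hz
  exact (neg_nonpos.mpr (Nat.cast_nonneg m : (0:ℝ) ≤ m)).not_gt hz

private lemma hG {z : ℂ} (hz : 0 < z.re) : HasDerivAt Complex.Gamma (deriv Complex.Gamma z) z :=
  ((analyticOnNhd_Gamma z hz).differentiableAt).hasDerivAt

private lemma hG' {z : ℂ} (hz : 0 < z.re) :
    HasDerivAt (deriv Complex.Gamma) (deriv (deriv Complex.Gamma) z) z :=
  ((analyticOnNhd_Gamma.deriv z hz).differentiableAt).hasDerivAt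

private lemma Gamma_half : Complex.Gamma (1/2) = ↑(Real.sqrt π) := by
  rw [Complex.Gamma_one_half_eq, Real.sqrt_eq_rpow, Complex.ofReal_cpow Real.pi_pos.le]
  norm_num

private lemma sin_pi_half : Complex.sin (↑π * (1/2 : ℂ)) = 1 := by
  rw [show (↑π * (1/2:ℂ)) = ↑π/2 by ring, Complex.sin_pi_div_two]

private lemma cos_pi_half : Complex.cos (↑π * (1/2 : ℂ)) = 0 := by
  rw [show (↑π * (1/2:ℂ)) = ↑π/2 by ring, Complex.cos_pi_div_two]

private lemma eq1 :
    2 * Complex.Gamma (1/2) * deriv (deriv Complex.Gamma) (1/2)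
      - 2 * (deriv Complex.Gamma (1/2))^2 = (π:ℂ)^3 := by
  set G := Complex.Gamma with hGdef
  set dG := deriv Complex.Gamma with hdGdef
  set φ : ℂ → ℂ := fun s => dG s * G (1 - s) - G s * dG (1 - s) with hφ
  have hhalf : (0:ℝ) < (1/2 : ℂ).re := by norm_num
  -- derivative of the product Γ(s)Γ(1-s)
  have hsub : ∀ z : ℂ, HasDerivAt (fun s : ℂ => 1 - s) (-1) (z) := by
    intro z
    simpa using (hasDerivAt_id z).const_sub 1
  have hF : ∀ z : ℂ, 0 < z.re → z.re < 1 →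
      HasDerivAt (fun s : ℂ => G s * G (1 - s)) (φ z) z := by
    intro z h1 h2
    have hz' : 0 < (1 - z).re := by
      simp only [Complex.sub_re, Complex.one_re]; linarith
    have hb : HasDerivAt (fun s : ℂ => G (1 - s)) (dG (1 - z) * (-1)) z :=
      (hG hz').comp z (hsub z)
    exact ((hG h1).mul hb).congr_deriv (by rw [hφ]; ring)
  have e1 : (fun s : ℂ => G s * G (1 - s)) = fun s => ↑π / Complex.sin (↑π * s) :=
    funext Complex.Gamma_mul_Gamma_one_sub
  have hV : {z : ℂ | 0 < z.re ∧ z.re < 1} ∈ 𝓝 (1/2 : ℂ) :=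
    ((isOpen_lt continuous_const continuous_re).inter
      (isOpen_lt continuous_re continuous_const)).mem_nhds (by norm_num)
  have hφ_ev : φ =ᶠ[𝓝 (1/2:ℂ)] deriv (fun s : ℂ => ↑π / Complex.sin (↑π * s)) := by
    filter_upwards [hV] with z hz
    rw [← e1]
    exact ((hF z hz.1 hz.2).deriv).symm
  -- derivative of π / sin (π s) away from zeros of sin
  have hsin : ∀ z : ℂ, HasDerivAt (fun s : ℂ => Complex.sin (↑π * s))
      (Complex.cos (↑π * z) * ↑π) z := by
    intro z
    have h1 : HasDerivAt (fun s : ℂ => (↑π * s : ℂ)) (↑π) z := by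
      simpa using (hasDerivAt_id z).const_mul (↑π : ℂ)
    exact h1.csin
  have hh1 : ∀ z : ℂ, Complex.sin (↑π * z) ≠ 0 →
      HasDerivAt (fun s : ℂ => ↑π / Complex.sin (↑π * s))
        (-((π:ℂ)^2 * Complex.cos (↑π * z)) / (Complex.sin (↑π * z))^2) z := by
    intro z hz
    exact ((hasDerivAt_const z (↑π:ℂ)).div (hsin z) hz).congr_deriv (by ring)
  have hW : ∀ᶠ z : ℂ in 𝓝 (1/2 : ℂ), Complex.sin (↑π * z) ≠ 0 := by
    have hcont : ContinuousAt (fun z : ℂ => Complex.sin (↑π * z)) (1/2 : ℂ) :=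
      (Complex.continuous_sin.comp (continuous_const.mul continuous_id)).continuousAt
    exact hcont.eventually_ne (by rw [sin_pi_half]; exact one_ne_zero)
  have hder_ev : deriv (fun s : ℂ => ↑π / Complex.sin (↑π * s)) =ᶠ[𝓝 (1/2:ℂ)]
      (fun z => -((π:ℂ)^2 * Complex.cos (↑π * z)) / (Complex.sin (↑π * z))^2) := by
    filter_upwards [hW] with z hz
    exact (hh1 z hz).deriv
  -- second derivative of π / sin at 1/2 is π^3
  have hfin : HasDerivAt (fun z : ℂ => -((π:ℂ)^2 * Complex.cos (↑π * z)) / (Complex.sin (↑π * z))^2)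
      ((π:ℂ)^3) (1/2 : ℂ) := by
    have hu : HasDerivAt (fun z : ℂ => -((π:ℂ)^2 * Complex.cos (↑π * z)))
        (-((π:ℂ)^2 * (-Complex.sin (↑π * (1/2:ℂ)) * ↑π))) (1/2 : ℂ) := by
      have h1 : HasDerivAt (fun s : ℂ => (↑π * s : ℂ)) (↑π) (1/2:ℂ) := by
        simpa using (hasDerivAt_id (1/2:ℂ)).const_mul (↑π : ℂ)
      have h2 := (Complex.hasDerivAt_cos (↑π * (1/2:ℂ))).comp (1/2:ℂ) h1
      have h3 := (h2.const_mul ((π:ℂ)^2 : ℂ)).neg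
      exact h3.congr_deriv (by ring)
    have hv : HasDerivAt (fun z : ℂ => (Complex.sin (↑π * z))^2)
        (2 * Complex.sin (↑π * (1/2:ℂ)) * (Complex.cos (↑π * (1/2:ℂ)) * ↑π)) (1/2 : ℂ) := by
      simpa using (hsin (1/2:ℂ)).fun_pow 2
    have hne : (Complex.sin (↑π * (1/2:ℂ)))^2 ≠ 0 := by rw [sin_pi_half]; norm_num
    refine ((hu.div hv hne).congr_deriv ?_)
    rw [sin_pi_half, cos_pi_half]
    ring
  have key1 : HasDerivAt φ ((π:ℂ)^3) (1/2 : ℂ) :=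
    hfin.congr_of_eventuallyEq (hφ_ev.trans hder_ev)
  -- the other expression for the derivative of φ at 1/2
  have h1mz : (1 - (1/2:ℂ)) = 1/2 := by norm_num
  have hgat : HasDerivAt G (dG (1/2)) (1 - (1/2:ℂ)) := by rw [h1mz]; exact hG hhalf
  have hgat' : HasDerivAt dG (deriv dG (1/2)) (1 - (1/2:ℂ)) := by rw [h1mz]; exact hG' hhalf
  have hbG : HasDerivAt (fun s : ℂ => G (1 - s)) (dG (1/2) * (-1)) (1/2:ℂ) := by
    exact hgat.comp (1/2:ℂ) (hsub (1/2:ℂ))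
  have hbdG : HasDerivAt (fun s : ℂ => dG (1 - s)) (deriv dG (1/2) * (-1)) (1/2:ℂ) := by
    exact hgat'.comp (1/2:ℂ) (hsub (1/2:ℂ))
  have key2 : HasDerivAt φ
      (2 * G (1/2) * deriv dG (1/2) - 2 * (dG (1/2))^2) (1/2 : ℂ) := by
    exact (((hG' hhalf).mul hbG).sub ((hG hhalf).mul hbdG)).congr_deriv (by simp only [hGdef, hdGdef]; ring)
  exact (key2.unique key1)

private lemma eq2 :
    deriv (deriv Complex.Gamma) (1/2) * Complex.Gamma 1
      + deriv Complex.Gamma (1/2) * deriv Complex.Gamma 1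
      + (deriv Complex.Gamma (1/2) * deriv Complex.Gamma 1
        + Complex.Gamma (1/2) * deriv (deriv Complex.Gamma) 1)
    = (4 * deriv (deriv Complex.Gamma) 1 - 8 * Complex.log 2 * deriv Complex.Gamma 1
        + 4 * (Complex.log 2)^2 * Complex.Gamma 1) * ↑(Real.sqrt π) := by
  set G := Complex.Gamma with hGdef
  set dG := deriv Complex.Gamma with hdGdef
  set L := Complex.log 2 with hLdef
  set r : ℂ := ↑(Real.sqrt π) with hrdef
  have hhalf : (0:ℝ) < (1/2 : ℂ).re := by norm_num
  set ψ : ℂ → ℂ := fun z => dG z * G (z + 1/2) + G z * (dG (z + 1/2) * 1) with hψ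
  set χ : ℂ → ℂ := fun z =>
    (dG (2*z) * 2 * (2:ℂ)^(1-2*z) + G (2*z) * ((2:ℂ)^(1-2*z) * L * (-2))) * r with hχ
  have hshift : ∀ z : ℂ, HasDerivAt (fun s : ℂ => s + 1/2) 1 z :=
    fun z => (hasDerivAt_id z).add_const _
  have hdouble : ∀ z : ℂ, HasDerivAt (fun s : ℂ => 2*s) 2 z := by
    intro z
    simpa using (hasDerivAt_id z).const_mul (2:ℂ)
  have hlin : ∀ z : ℂ, HasDerivAt (fun s : ℂ => 1 - 2*s) (-2) z := by
    intro z
    simpa using (hdouble z).const_sub 1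
  have hpow : ∀ z : ℂ, HasDerivAt (fun s : ℂ => (2:ℂ)^(1-2*s))
      ((2:ℂ)^(1-2*z) * L * (-2)) z :=
    fun z => (hlin z).const_cpow (Or.inl two_ne_zero)
  have hP : ∀ z : ℂ, 0 < z.re →
      HasDerivAt (fun s : ℂ => G s * G (s + 1/2)) (ψ z) z := by
    intro z hz
    have hz' : 0 < (z + 1/2).re := by
      simp only [Complex.add_re]
      have : (1/2 : ℂ).re = 1/2 := by norm_num
      rw [this]; linarith
    have hb : HasDerivAt (fun s : ℂ => G (s + 1/2)) (dG (z + 1/2) * 1) z :=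
      (hG hz').comp z (hshift z)
    exact ((hG hz).mul hb).congr_deriv (by rw [hψ])
  have hQ : ∀ z : ℂ, 0 < z.re →
      HasDerivAt (fun s : ℂ => G (2*s) * (2:ℂ)^(1-2*s) * r) (χ z) z := by
    intro z hz
    have hz2 : 0 < (2*z).re := by
      simp only [Complex.mul_re]
      norm_num
      linarith
    have hGc : HasDerivAt (fun s : ℂ => G (2*s)) (dG (2*z) * 2) z :=
      (hG hz2).comp z (hdouble z)
    exact ((hGc.mul (hpow z)).mul_const r).congr_deriv (by rw [hχ])
  have hdup : (fun s : ℂ => G s * G (s + 1/2))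
      = (fun s : ℂ => G (2*s) * (2:ℂ)^(1-2*s) * r) :=
    funext Complex.Gamma_mul_Gamma_add_half
  have hS : {z : ℂ | 0 < z.re} ∈ 𝓝 (1/2 : ℂ) :=
    (isOpen_lt continuous_const continuous_re).mem_nhds hhalf
  have hev : ψ =ᶠ[𝓝 (1/2:ℂ)] χ := by
    filter_upwards [hS] with z hz
    have h1 := (hP z hz).deriv
    have h2 := (hQ z hz).deriv
    rw [hdup] at h1
    rw [← h1, ← h2]
  -- derivative of ψ at 1/2
  have e1 : ((1/2:ℂ) + 1/2) = 1 := by norm_num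
  have h2h : (2 * (1/2:ℂ)) = 1 := by norm_num
  have h0 : (1 - 2*(1/2:ℂ)) = 0 := by norm_num
  have hone : (0:ℝ) < (1:ℂ).re := by norm_num
  have hbsgen : ∀ z : ℂ, 0 < (z + 1/2).re →
      HasDerivAt (fun s : ℂ => G (s + 1/2)) (dG (z + 1/2) * 1) z :=
    fun z hz' => (hG hz').comp z (hshift z)
  have hbsgen' : ∀ z : ℂ, 0 < (z + 1/2).re →
      HasDerivAt (fun s : ℂ => dG (s + 1/2)) (deriv dG (z + 1/2) * 1) z :=
    fun z hz' => by have := (hG' hz').comp z (hshift z); exact this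
  have hbs := hbsgen (1/2) (by norm_num)
  have hbs' := hbsgen' (1/2) (by norm_num)
  rw [e1] at hbs hbs'
  have hψval : HasDerivAt ψ
      (deriv dG (1/2) * G 1 + dG (1/2) * dG 1
        + (dG (1/2) * dG 1 + G (1/2) * deriv dG 1)) (1/2:ℂ) := by
    have := ((hG' hhalf).mul hbs).add (((hG hhalf).mul hbs').mul_const (1:ℂ))
    refine (this.congr_of_eventuallyEq ?_).congr_deriv ?_
    · exact Filter.Eventually.of_forall (fun z => by rw [hψ]; simp only [Pi.mul_apply, Pi.add_apply, hGdef, hdGdef]; ring)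
    · rw [e1]; try ring
  -- derivative of χ at 1/2
  have hGcgen : ∀ z : ℂ, 0 < (2*z).re →
      HasDerivAt (fun s : ℂ => G (2*s)) (dG (2*z) * 2) z :=
    fun z hz2 => (hG hz2).comp z (hdouble z)
  have hGcgen' : ∀ z : ℂ, 0 < (2*z).re →
      HasDerivAt (fun s : ℂ => dG (2*s)) (deriv dG (2*z) * 2) z :=
    fun z hz2 => (hG' hz2).comp z (hdouble z)
  have hGc := hGcgen (1/2) (by norm_num [Complex.mul_re])
  have hGc' := hGcgen' (1/2) (by norm_num [Complex.mul_re])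
  rw [h2h] at hGc hGc'
  have hpowh : HasDerivAt (fun s : ℂ => (2:ℂ)^(1-2*s)) (L * (-2)) (1/2:ℂ) := by
    have := hpow (1/2:ℂ)
    rwa [h0, Complex.cpow_zero, one_mul] at this
  have hχval : HasDerivAt χ
      ((4 * deriv dG 1 - 8 * L * dG 1 + 4 * L^2 * G 1) * r) (1/2:ℂ) := by
    have hA : HasDerivAt (fun s : ℂ => dG (2*s) * 2 * (2:ℂ)^(1-2*s))
        ((deriv dG 1 * 2 * 2) * (2:ℂ)^(1-2*(1/2:ℂ)) + (dG 1 * 2) * (L * (-2))) (1/2:ℂ) :=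
      ((hGc'.mul_const 2).mul hpowh).congr_deriv (by rw [h2h]; try ring)
    have hB : HasDerivAt (fun s : ℂ => G (2*s) * ((2:ℂ)^(1-2*s) * L * (-2)))
        ((dG 1 * 2) * ((2:ℂ)^(1-2*(1/2:ℂ)) * L * (-2)) + G 1 * ((L * (-2)) * L * (-2)))
        (1/2:ℂ) := by
      have hpm : HasDerivAt (fun s : ℂ => (2:ℂ)^(1-2*s) * L * (-2))
          ((L * (-2)) * L * (-2)) (1/2:ℂ) := (hpowh.mul_const L).mul_const (-2)
      exact (hGc.mul hpm).congr_deriv (by rw [h2h]; try ring)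
    have := (hA.add hB).mul_const r
    refine (this.congr_of_eventuallyEq ?_).congr_deriv ?_
    · exact Filter.Eventually.of_forall (fun z => by rw [hχ]; rfl)
    · rw [h0, Complex.cpow_zero]
      try ring
  exact hψval.unique (hχval.congr_of_eventuallyEq hev)

private lemma second_deriv_Gamma_one :
    deriv (deriv Complex.Gamma) 1
      = ((π^2/6 + Real.eulerMascheroniConstant^2 : ℝ) : ℂ) := by
  have h1 := eq1
  have h2 := eq2
  rw [Gamma_half, Complex.hasDerivAt_Gamma_one_half.deriv] at h1
  rw [Complex.Gamma_one, Gamma_half, Complex.hasDerivAt_Gamma_one.deriv,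
    Complex.hasDerivAt_Gamma_one_half.deriv] at h2
  have hr2 : (↑(Real.sqrt π) : ℂ)^2 = ↑π := by
    rw [← Complex.ofReal_pow, Real.sq_sqrt Real.pi_pos.le]
  have hpne : (↑π : ℂ) ≠ 0 := by
    simpa using Real.pi_ne_zero
  set A := deriv (deriv Complex.Gamma) 1 with hA
  set B := deriv (deriv Complex.Gamma) (1/2) with hB
  set c : ℂ := ↑Real.eulerMascheroniConstant with hc
  set L : ℂ := Complex.log 2 with hL
  set r : ℂ := ↑(Real.sqrt π) with hr
  have h6 : 6 * (↑π:ℂ) * A = (↑π:ℂ)^3 + 6 * ↑π * c^2 := by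
    linear_combination h1 - 2*r*h2 - 6*(A - c^2)*hr2
  have : A = (↑π:ℂ)^2/6 + c^2 := by
    have hmul : (↑π:ℂ) * A = ↑π * ((↑π:ℂ)^2/6 + c^2) := by
      linear_combination (1/6 : ℂ) * h6
    exact mul_left_cancel₀ hpne hmul
  rw [this, hc]
  push_cast
  ring

theorem stmt3 :
    (∫ u in Set.Ioi (0 : ℝ), (Real.log u) ^ 2 * Real.exp (-u))
      = Real.pi ^ 2 / 6 + Real.eulerMascheroniConstant ^ 2 := by
  have hval := second_deriv_Gamma_one
  rw [hasDerivAt_deriv_Gamma_one.deriv, mellin_f2_one] at hval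
  exact_mod_cast hval

end
end

section
/- Define φ(α) = -∫_1^∞ (e^{-α y}/y) · log(1 - 1/y) dy. Then as α → ∞, φ(α) = O(α^{-1} e^{-α} log α); more precisely there exist constants C > 0 and α₀ ≥ 2 such that φ(α) ≤ C α^{-1} e^{-α} log α for all α ≥ α₀. -/
open MeasureTheory Set Real

noncomputable def phi (α : ℝ) : ℝ :=
  -∫ y in Set.Ioi (1 : ℝ), Real.exp (-α * y) / y * Real.log (1 - 1 / y)

lemma neg_log_le_two_rpow {u : ℝ} (hu : 0 < u) : -Real.log u ≤ 2 * u ^ (-(1/2) : ℝ) := by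
  have h1 : Real.log (u ^ (-(1/2) : ℝ)) ≤ u ^ (-(1/2) : ℝ) - 1 :=
    Real.log_le_sub_one_of_pos (Real.rpow_pos_of_pos hu _)
  rw [Real.log_rpow hu] at h1
  linarith

theorem stmt8 :
    ∃ C > (0 : ℝ), ∃ α₀ ≥ (2 : ℝ), ∀ α ≥ α₀,
      phi α ≤ C * α⁻¹ * Real.exp (-α) * Real.log α := by
  refine ⟨10, by norm_num, 2, le_refl 2, fun α hα => ?_⟩
  have hα0 : (0:ℝ) < α := by linarith
  set L := Real.log α with hL
  have hLlb : (1/2 : ℝ) ≤ L := by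
    have h2 : Real.log 2 ≤ L := Real.log_le_log (by norm_num) hα
    have := Real.log_two_gt_d9
    linarith
  set c := 2 * α ^ (-(1/2) : ℝ) with hc
  set g : ℝ → ℝ := fun y =>
    Real.exp (-α * y) * ((y - 1) + L + c * (y - 1) ^ (-(1/2):ℝ)) with hg
  -- translation machinery
  have hemb : MeasurableEmbedding (fun t : ℝ => t + 1) := measurableEmbedding_addRight 1
  have hmp : MeasurePreserving (fun t : ℝ => t + 1) volume volume :=
    measurePreserving_add_right volume 1
  have hpre : (fun t : ℝ => t + 1) ⁻¹' (Set.Ioi 1) = Set.Ioi 0 := by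
    ext t; simp
  -- shifted integrand
  set F : ℝ → ℝ := fun t => Real.exp (-α) *
    (t ^ ((2:ℝ)-1) * Real.exp (-(α*t)) + L * (t ^ ((1:ℝ)-1) * Real.exp (-(α*t)))
      + c * (t ^ ((1/2:ℝ)-1) * Real.exp (-(α*t)))) with hF
  have hgF : ∀ t ∈ Set.Ioi (0:ℝ), g (t + 1) = F t := by
    intro t ht
    have hexp : Real.exp (-α * (t+1)) = Real.exp (-α) * Real.exp (-(α*t)) := by
      rw [← Real.exp_add]; ring_nf
    simp only [hg, hF, hexp, add_sub_cancel_right]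
    rw [show ((2:ℝ)-1) = 1 by norm_num, Real.rpow_one,
      show ((1:ℝ)-1) = 0 by norm_num, Real.rpow_zero,
      show ((1/2:ℝ)-1) = (-(1/2):ℝ) by norm_num]
    ring
  -- integrability of pieces
  have Ipiece : ∀ s : ℝ, -1 < s →
      IntegrableOn (fun t : ℝ => t ^ s * Real.exp (-(α*t))) (Set.Ioi 0) := by
    intro s hs
    have h := integrableOn_rpow_mul_exp_neg_mul_rpow hs (zero_lt_one' ℝ) hα0
    refine h.congr_fun (fun t ht => ?_) measurableSet_Ioi
    beta_reduce
    rw [Real.rpow_one, neg_mul]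
  have I2 := Ipiece ((2:ℝ)-1) (by norm_num)
  have I1 := Ipiece ((1:ℝ)-1) (by norm_num)
  have I0 := Ipiece ((1/2:ℝ)-1) (by norm_num)
  have hFint : IntegrableOn F (Set.Ioi 0) := by
    exact (((I2.add (I1.const_mul L)).add (I0.const_mul c)).const_mul (Real.exp (-α)))
  -- integrability of g on Ioi 1
  have hgint : IntegrableOn g (Set.Ioi 1) := by
    have h1 : IntegrableOn (fun t => g (t+1)) (Set.Ioi 0) :=
      hFint.congr_fun (fun t ht => (hgF t ht).symm) measurableSet_Ioi
    have h2 : IntegrableOn (g ∘ (fun t : ℝ => t + 1))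
        ((fun t : ℝ => t + 1) ⁻¹' (Set.Ioi 1)) volume := by
      rw [hpre]; exact h1
    exact (hmp.integrableOn_comp_preimage hemb).mp h2
  -- phi as an integral of a nonnegative function
  have hphi : phi α = ∫ y in Set.Ioi (1:ℝ),
      -(Real.exp (-α * y) / y * Real.log (1 - 1/y)) := by
    unfold phi; rw [← integral_neg]
  -- pointwise bound
  have hbound : phi α ≤ ∫ y in Set.Ioi (1:ℝ), g y := by
    rw [hphi]
    refine integral_mono_of_nonneg ?_ hgint ?_
    · filter_upwards [ae_restrict_mem measurableSet_Ioi] with y hy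
      have hy1 : (1:ℝ) < y := hy
      have h1y : (0:ℝ) ≤ 1 - 1/y := by
        have : 1/y ≤ 1 := by
          rw [div_le_one (by linarith)]; linarith
        linarith
      have hlog : Real.log (1 - 1/y) ≤ 0 :=
        Real.log_nonpos h1y (by
          have : (0:ℝ) ≤ 1/y := by positivity
          linarith)
      have hpos : (0:ℝ) ≤ Real.exp (-α * y) / y := by positivity
      simp only [Pi.zero_apply]
      nlinarith [mul_nonpos_of_nonneg_of_nonpos hpos hlog]
    · filter_upwards [ae_restrict_mem measurableSet_Ioi] with y hy
      have hy1 : (1:ℝ) < y := hy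
      have hy0 : (0:ℝ) < y := by linarith
      have hu : (0:ℝ) < y - 1 := by linarith
      have hfrac : 1 - 1/y = (y-1)/y := by field_simp
      have hlogeq : Real.log (1 - 1/y) = Real.log (y-1) - Real.log y := by
        rw [hfrac, Real.log_div (ne_of_gt hu) (ne_of_gt hy0)]
      have key : Real.log y - Real.log (y-1) ≤ (y-1) + L + c * (y-1) ^ (-(1/2):ℝ) := by
        have h1 : Real.log y ≤ y - 1 := Real.log_le_sub_one_of_pos hy0
        have h3 : -Real.log (α * (y-1)) ≤ 2 * (α*(y-1)) ^ (-(1/2):ℝ) :=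
          neg_log_le_two_rpow (by positivity)
        have h4 : Real.log (α*(y-1)) = L + Real.log (y-1) := by
          rw [Real.log_mul (ne_of_gt hα0) (ne_of_gt hu)]
        have h5 : (α*(y-1)) ^ (-(1/2):ℝ) = α ^ (-(1/2):ℝ) * (y-1) ^ (-(1/2):ℝ) :=
          Real.mul_rpow hα0.le hu.le
        rw [h4, h5] at h3
        rw [hc]
        linarith
      have hdiff : 0 ≤ Real.log y - Real.log (y-1) := by
        have : Real.log (y-1) ≤ Real.log y := Real.log_le_log hu (by linarith)
        linarith
      have hE : (0:ℝ) < Real.exp (-α * y) := Real.exp_pos _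
      have heq : -(Real.exp (-α * y) / y * Real.log (1 - 1/y))
          = Real.exp (-α * y) / y * (Real.log y - Real.log (y-1)) := by
        rw [hlogeq]; ring
      rw [heq]
      calc Real.exp (-α * y) / y * (Real.log y - Real.log (y-1))
          ≤ Real.exp (-α * y) * (Real.log y - Real.log (y-1)) :=
            mul_le_mul_of_nonneg_right (div_le_self hE.le hy1.le) hdiff
        _ ≤ Real.exp (-α * y) * ((y-1) + L + c * (y-1) ^ (-(1/2):ℝ)) :=
            mul_le_mul_of_nonneg_left key hE.le
        _ = g y := rfl
  -- value of the integral of g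
  have hgval : ∫ y in Set.Ioi (1:ℝ), g y = ∫ t in Set.Ioi (0:ℝ), F t := by
    rw [← hmp.setIntegral_preimage_emb hemb g (Set.Ioi 1), hpre]
    exact setIntegral_congr_fun measurableSet_Ioi hgF
  have val : ∀ a : ℝ, 0 < a →
      ∫ t in Set.Ioi (0:ℝ), t ^ (a-1) * Real.exp (-(α*t)) = (1/α)^a * Real.Gamma a :=
    fun a ha => Real.integral_rpow_mul_exp_neg_mul_Ioi ha hα0
  have hFval : ∫ t in Set.Ioi (0:ℝ), F t
      = Real.exp (-α) * ((1/α)^(2:ℝ) * Real.Gamma 2 + L * ((1/α)^(1:ℝ) * Real.Gamma 1)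
        + c * ((1/α)^((1:ℝ)/2) * Real.Gamma ((1:ℝ)/2))) := by
    simp only [hF]
    have J1 : IntegrableOn (fun t : ℝ => t ^ ((2:ℝ)-1) * Real.exp (-(α*t))
        + L * (t ^ ((1:ℝ)-1) * Real.exp (-(α*t)))) (Set.Ioi 0) := I2.add (I1.const_mul L)
    have J2 : IntegrableOn (fun t : ℝ => c * (t ^ ((1/2:ℝ)-1) * Real.exp (-(α*t))))
        (Set.Ioi 0) := I0.const_mul c
    have J3 : IntegrableOn (fun t : ℝ => L * (t ^ ((1:ℝ)-1) * Real.exp (-(α*t))))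
        (Set.Ioi 0) := I1.const_mul L
    rw [MeasureTheory.integral_const_mul, integral_add J1 J2, integral_add I2 J3,
      MeasureTheory.integral_const_mul, MeasureTheory.integral_const_mul,
      val 2 (by norm_num), val 1 (by norm_num), val (1/2) (by norm_num)]
  -- final arithmetic
  rw [Real.Gamma_two, Real.Gamma_one, Real.Gamma_one_half_eq] at hFval
  have hmm : α ^ (-(1/2):ℝ) * α ^ (-(1/2):ℝ) = α⁻¹ := by
    rw [← Real.rpow_add hα0, show (-(1/2) + -(1/2) : ℝ) = -1 by norm_num,
      Real.rpow_neg_one]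
  have hhalf : ((1:ℝ)/α) ^ ((1:ℝ)/2) = α ^ (-(1/2):ℝ) := by
    rw [one_div, ← Real.rpow_neg_one α, ← Real.rpow_mul hα0.le]
    norm_num
  have htwo : ((1:ℝ)/α) ^ (2:ℝ) = α⁻¹ * α⁻¹ := by
    rw [one_div, show (2:ℝ) = ((2:ℕ):ℝ) by norm_num, Real.rpow_natCast]
    ring
  have hone : ((1:ℝ)/α) ^ (1:ℝ) = α⁻¹ := by
    rw [Real.rpow_one, one_div]
  rw [htwo, hone, hhalf] at hFval
  have hsq : Real.sqrt π ≤ 2 := by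
    rw [show (2:ℝ) = Real.sqrt 4 by
      rw [show (4:ℝ) = 2^2 by norm_num, Real.sqrt_sq (by norm_num)]]
    exact Real.sqrt_le_sqrt pi_le_four
  have hainv : (0:ℝ) ≤ α⁻¹ := by positivity
  have hinv2 : α⁻¹ ≤ 1/2 := by
    rw [show (1/2 : ℝ) = (2:ℝ)⁻¹ by norm_num]
    exact inv_anti₀ (by norm_num) hα
  have hsqpos : (0:ℝ) ≤ Real.sqrt π := Real.sqrt_nonneg _
  have inner : α⁻¹ * α⁻¹ * 1 + L * (α⁻¹ * 1)
      + c * (α ^ (-(1/2):ℝ) * Real.sqrt π) ≤ 10 * L * α⁻¹ := by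
    have hcval : c * (α ^ (-(1/2):ℝ) * Real.sqrt π) = 2 * Real.sqrt π * α⁻¹ := by
      rw [hc]
      calc 2 * α ^ (-(1/2):ℝ) * (α ^ (-(1/2):ℝ) * Real.sqrt π)
          = 2 * Real.sqrt π * (α ^ (-(1/2):ℝ) * α ^ (-(1/2):ℝ)) := by ring
        _ = 2 * Real.sqrt π * α⁻¹ := by rw [hmm]
    rw [hcval]
    have A1 : α⁻¹ * α⁻¹ * 1 ≤ L * α⁻¹ := by
      have : α⁻¹ * α⁻¹ ≤ (1/2) * α⁻¹ := mul_le_mul_of_nonneg_right hinv2 hainv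
      nlinarith
    have A2 : 2 * Real.sqrt π * α⁻¹ ≤ 8 * L * α⁻¹ := by
      have h24 : 2 * Real.sqrt π ≤ 8 * L := by nlinarith
      exact mul_le_mul_of_nonneg_right h24 hainv
    nlinarith
  calc phi α ≤ ∫ y in Set.Ioi (1:ℝ), g y := hbound
    _ = Real.exp (-α) * (α⁻¹ * α⁻¹ * 1 + L * (α⁻¹ * 1)
        + c * (α ^ (-(1/2):ℝ) * Real.sqrt π)) := by rw [hgval, hFval]
    _ ≤ Real.exp (-α) * (10 * L * α⁻¹) :=
        mul_le_mul_of_nonneg_left inner (Real.exp_pos _).le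
    _ = 10 * α⁻¹ * Real.exp (-α) * L := by ring
end

section
/- As λ → ∞, λ W(λ) = (log λ)^{-2} − 2γ (log λ)^{-3} + O((log λ)^{-4}), where W(λ) = ∫_0^∞ e^{-λu}/((log u)² + π²) du and γ is the Euler–Mascheroni constant. -/
set_option maxHeartbeats 1000000

open MeasureTheory Set Real


lemma log_le_rpow_aux {a t : ℝ} (ha : 0 < a) (ht : 0 < t) :
    Real.log t ≤ a⁻¹ * t ^ a := by
  have h1 : Real.log (t ^ a) ≤ t ^ a := by
    have := Real.log_le_sub_one_of_pos (Real.rpow_pos_of_pos ht a)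
    linarith
  rw [Real.log_rpow ht] at h1
  calc Real.log t = a⁻¹ * (a * Real.log t) := by field_simp
  _ ≤ a⁻¹ * t ^ a := by
      apply mul_le_mul_of_nonneg_left h1 (by positivity)

lemma abs_log_le {a t : ℝ} (ha : 0 < a) (ht : 0 < t) :
    |Real.log t| ≤ a⁻¹ * (t ^ (-a) + t ^ a) := by
  have h1 := log_le_rpow_aux ha ht
  have h2 := log_le_rpow_aux ha (inv_pos.mpr ht)
  rw [Real.log_inv, Real.inv_rpow ht.le, ← Real.rpow_neg ht.le] at h2
  have h3 : (0:ℝ) ≤ t ^ (-a) := (Real.rpow_pos_of_pos ht _).le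
  have h4 : (0:ℝ) ≤ t ^ a := (Real.rpow_pos_of_pos ht _).le
  have h5 : (0:ℝ) ≤ a⁻¹ := by positivity
  rw [abs_le]
  constructor <;> nlinarith



lemma integral_exp_neg_mul_log :
    ∫ t in Ioi (0:ℝ), Real.exp (-t) * Real.log t = -Real.eulerMascheroniConstant := by
  have hD := Complex.hasDerivAt_GammaIntegral (s := 1) (by norm_num)
  have hev : Complex.Gamma =ᶠ[nhds (1:ℂ)] Complex.GammaIntegral := by
    filter_upwards [(isOpen_lt continuous_const Complex.continuous_re).mem_nhds
      (by norm_num : (0:ℝ) < (1:ℂ).re)] with z hz using Complex.Gamma_eq_integral hz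
  have hG := hD.congr_of_eventuallyEq hev
  have := Complex.hasDerivAt_Gamma_one.unique hG
  have hco : (∫ t : ℝ in Ioi 0, (t:ℂ) ^ ((1:ℂ) - 1) * ((Real.log t : ℂ) * (Real.exp (-t) : ℂ)))
      = ((∫ t in Ioi (0:ℝ), Real.exp (-t) * Real.log t : ℝ) : ℂ) := by
    have : ∀ t ∈ Ioi (0:ℝ), (t:ℂ) ^ ((1:ℂ) - 1) * ((Real.log t : ℂ) * (Real.exp (-t) : ℂ))
        = ((Real.exp (-t) * Real.log t : ℝ) : ℂ) := by
      intro t ht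
      simp [mul_comm]
    rw [setIntegral_congr_fun measurableSet_Ioi this]
    exact integral_ofReal
  rw [hco] at this
  exact_mod_cast this.symm

lemma integrableOn_exp_neg : IntegrableOn (fun t : ℝ => Real.exp (-t)) (Ioi 0) := by
  simpa using exp_neg_integrableOn_Ioi 0 (one_pos)

lemma integrableOn_H : IntegrableOn
    (fun t : ℝ => Real.exp (-t) * (t ^ (-(1/2):ℝ) + t ^ ((1/2):ℝ))) (Ioi 0) := by
  have h1 := Real.GammaIntegral_convergent (by norm_num : (0:ℝ) < 1/2)
  have h2 := Real.GammaIntegral_convergent (by norm_num : (0:ℝ) < 3/2)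
  have heq : (fun t:ℝ => Real.exp (-t) * (t ^ (-(1/2):ℝ) + t ^ ((1/2):ℝ)))
      = fun t => Real.exp (-t) * t ^ ((1/2:ℝ)-1) + Real.exp (-t) * t ^ ((3/2:ℝ)-1) := by
    ext t
    rw [show ((1/2:ℝ)-1) = -(1/2) by norm_num, show ((3/2:ℝ)-1) = ((1/2):ℝ) by norm_num]
    ring
  rw [heq]
  exact h1.add h2

lemma integrableOn_f (L : ℝ) : IntegrableOn
    (fun t : ℝ => Real.exp (-t) / ((Real.log t - L) ^ 2 + Real.pi ^ 2)) (Ioi 0) := by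
  apply Integrable.mono' (integrableOn_exp_neg.const_mul ((Real.pi ^ 2)⁻¹))
  · exact ((Real.measurable_exp.comp measurable_neg).div
      (((Real.measurable_log.sub measurable_const).pow_const 2).add
        measurable_const)).aestronglyMeasurable
  · refine Filter.Eventually.of_forall fun t => ?_
    have hd : (0:ℝ) < (Real.log t - L) ^ 2 + Real.pi ^ 2 := by positivity
    rw [Real.norm_eq_abs, abs_of_nonneg (by positivity)]
    rw [show (Real.pi ^ 2)⁻¹ * Real.exp (-t) = Real.exp (-t) / Real.pi ^ 2 by ring]
    apply div_le_div_of_nonneg_left (Real.exp_nonneg (-t)) (by positivity)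
    nlinarith [sq_nonneg (Real.log t - L)]

lemma integrableOn_exp_neg_mul_log : IntegrableOn
    (fun t : ℝ => Real.exp (-t) * Real.log t) (Ioi 0) := by
  apply Integrable.mono' (integrableOn_H.const_mul 2)
  · exact ((Real.measurable_exp.comp measurable_neg).mul
      Real.measurable_log).aestronglyMeasurable
  · filter_upwards [ae_restrict_mem measurableSet_Ioi] with t ht
    have ht' : (0:ℝ) < t := ht
    have := abs_log_le (by norm_num : (0:ℝ) < 1/2) ht'
    rw [Real.norm_eq_abs, abs_mul, abs_of_nonneg (Real.exp_nonneg (-t))]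
    have h2 : ((1/2:ℝ))⁻¹ = 2 := by norm_num
    rw [h2] at this
    nlinarith [Real.exp_nonneg (-t)]

lemma one_add_abs_log_pow_four_le {t : ℝ} (ht : 0 < t) :
    (1 + |Real.log t|) ^ 4 ≤ 52488 * (t ^ (-(1/2):ℝ) + t ^ ((1/2):ℝ)) := by
  set u := t ^ ((1/8):ℝ) with hu_def
  set v := t ^ (-(1/8):ℝ) with hv_def
  have hu : 0 < u := Real.rpow_pos_of_pos ht _
  have hv : 0 < v := Real.rpow_pos_of_pos ht _
  have huv : v * u = 1 := by
    rw [hu_def, hv_def, ← Real.rpow_add ht]; norm_num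
  have h8 : |Real.log t| ≤ 8 * (v + u) := by
    have := abs_log_le (by norm_num : (0:ℝ) < 1/8) ht
    rw [show ((1/8:ℝ))⁻¹ = 8 by norm_num] at this
    linarith
  have h1 : (1:ℝ) ≤ v + u := by nlinarith [sq_nonneg (u - 1)]
  have hstep : 1 + |Real.log t| ≤ 9 * (v + u) := by linarith
  have hpow : (1 + |Real.log t|) ^ 4 ≤ (9 * (v + u)) ^ 4 :=
    pow_le_pow_left₀ (by positivity) hstep 4
  have hsum : (v + u) ^ 4 ≤ 8 * (v ^ 4 + u ^ 4) := by
    nlinarith [sq_nonneg (u - v), sq_nonneg (u + v), sq_nonneg (u ^ 2 - v ^ 2),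
      sq_nonneg (u ^ 2 + v ^ 2), sq_nonneg u, sq_nonneg v]
  have hv4 : v ^ 4 = t ^ (-(1/2):ℝ) := by
    rw [hv_def, ← Real.rpow_natCast (t ^ (-(1/8):ℝ)) 4, ← Real.rpow_mul ht.le]; norm_num
  have hu4 : u ^ 4 = t ^ ((1/2):ℝ) := by
    rw [hu_def, ← Real.rpow_natCast (t ^ ((1/8):ℝ)) 4, ← Real.rpow_mul ht.le]; norm_num
  calc (1 + |Real.log t|) ^ 4 ≤ (9 * (v + u)) ^ 4 := hpow
  _ = 6561 * (v + u) ^ 4 := by ring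
  _ ≤ 6561 * (8 * (v ^ 4 + u ^ 4)) := by linarith
  _ = 52488 * (t ^ (-(1/2):ℝ) + t ^ ((1/2):ℝ)) := by rw [hv4, hu4]; ring

lemma key_bound {L s : ℝ} (hL : 2 ≤ L) :
    |((L - s) ^ 2 + Real.pi ^ 2)⁻¹ - ((L ^ 2)⁻¹ + 2 * s * (L ^ 3)⁻¹)|
      ≤ 600 * (1 + |s|) ^ 4 / L ^ 4 := by
  have hL0 : (0:ℝ) < L := by linarith
  have hd : (0:ℝ) < (L - s) ^ 2 + Real.pi ^ 2 := by positivity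
  set x := |s| with hx_def
  have hx : 0 ≤ x := abs_nonneg s
  have hsx : s ≤ x := le_abs_self s
  have hsx' : -x ≤ s := neg_abs_le s
  have hs2 : s ^ 2 = x ^ 2 := (sq_abs s).symm
  have hs3u : s ^ 3 ≤ x ^ 3 := by
    calc s ^ 3 ≤ |s ^ 3| := le_abs_self _
    _ = x ^ 3 := by rw [abs_pow]
  have hs3l : -(x ^ 3) ≤ s ^ 3 := by
    have : |s ^ 3| = x ^ 3 := by rw [abs_pow]
    linarith [neg_abs_le (s ^ 3)]
  have hpi3 : (3:ℝ) ≤ Real.pi := Real.pi_gt_three.le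
  have hpi4 : Real.pi ≤ 3.15 := Real.pi_lt_d2.le
  have hpisq : Real.pi ^ 2 ≤ 10 := by nlinarith
  have hpisq9 : (9:ℝ) ≤ Real.pi ^ 2 := by nlinarith
  rcases le_or_gt x (L / 2) with hcase | hcase
  · -- |s| ≤ L/2
    have hdiff : ((L - s) ^ 2 + Real.pi ^ 2)⁻¹ - ((L ^ 2)⁻¹ + 2 * s * (L ^ 3)⁻¹)
        = (3 * L * s ^ 2 - 2 * s ^ 3 - Real.pi ^ 2 * L - 2 * Real.pi ^ 2 * s)
          / (L ^ 3 * ((L - s) ^ 2 + Real.pi ^ 2)) := by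
      field_simp
      ring
    have habs : |3 * L * s ^ 2 - 2 * s ^ 3 - Real.pi ^ 2 * L - 2 * Real.pi ^ 2 * s|
        ≤ L * (3 * x ^ 2 + x ^ 3 + Real.pi ^ 2 + Real.pi ^ 2 * x) := by
      rw [abs_le]
      constructor
      · nlinarith [mul_nonneg (by linarith : (0:ℝ) ≤ L - 2) (pow_nonneg hx 3),
          mul_nonneg (by positivity : (0:ℝ) ≤ Real.pi ^ 2) (by linarith : (0:ℝ) ≤ x - s),
          mul_nonneg (by positivity : (0:ℝ) ≤ Real.pi ^ 2) (by linarith : (0:ℝ) ≤ x + s),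
          mul_nonneg (mul_nonneg (by linarith : (0:ℝ) ≤ L - 2)
            (by positivity : (0:ℝ) ≤ Real.pi ^ 2)) hx,
          mul_pos (by positivity : (0:ℝ) < Real.pi ^ 2) hL0]
      · nlinarith [mul_nonneg (by linarith : (0:ℝ) ≤ L - 2) (pow_nonneg hx 3),
          mul_nonneg (by positivity : (0:ℝ) ≤ Real.pi ^ 2) (by linarith : (0:ℝ) ≤ x - s),
          mul_nonneg (by positivity : (0:ℝ) ≤ Real.pi ^ 2) (by linarith : (0:ℝ) ≤ x + s),
          mul_nonneg (mul_nonneg (by linarith : (0:ℝ) ≤ L - 2)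
            (by positivity : (0:ℝ) ≤ Real.pi ^ 2)) hx,
          mul_pos (by positivity : (0:ℝ) < Real.pi ^ 2) hL0]
    have hden : L ^ 5 / 4 ≤ L ^ 3 * ((L - s) ^ 2 + Real.pi ^ 2) := by
      have h1 : L / 2 ≤ L - s := by linarith
      have h2 : (L / 2) ^ 2 ≤ (L - s) ^ 2 := by nlinarith
      nlinarith [pow_pos hL0 3, sq_nonneg Real.pi,
        mul_le_mul_of_nonneg_left h2 (pow_pos hL0 3).le]
    rw [hdiff, abs_div, abs_of_pos (by positivity : (0:ℝ) < L ^ 3 * ((L - s) ^ 2 + Real.pi ^ 2))]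
    calc |3 * L * s ^ 2 - 2 * s ^ 3 - Real.pi ^ 2 * L - 2 * Real.pi ^ 2 * s|
          / (L ^ 3 * ((L - s) ^ 2 + Real.pi ^ 2))
        ≤ (L * (3 * x ^ 2 + x ^ 3 + Real.pi ^ 2 + Real.pi ^ 2 * x)) / (L ^ 5 / 4) :=
          div_le_div₀ (by positivity) habs (by positivity) hden
      _ = 4 * (3 * x ^ 2 + x ^ 3 + Real.pi ^ 2 + Real.pi ^ 2 * x) / L ^ 4 := by
          rw [div_eq_div_iff (by positivity : (0:ℝ) < L ^ 5 / 4).ne'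
            (by positivity : (0:ℝ) < L ^ 4).ne']
          ring
      _ ≤ 600 * (1 + x) ^ 4 / L ^ 4 := by
          gcongr ?_ / _
          nlinarith [pow_nonneg hx 2, pow_nonneg hx 3, pow_nonneg hx 4]
  · -- L/2 < |s|
    have hx1 : (1:ℝ) ≤ x := by linarith
    have hB : |((L - s) ^ 2 + Real.pi ^ 2)⁻¹ - ((L ^ 2)⁻¹ + 2 * s * (L ^ 3)⁻¹)|
        ≤ (Real.pi ^ 2)⁻¹ + ((L ^ 2)⁻¹ + 2 * x * (L ^ 3)⁻¹) := by
      have h1 : |((L - s) ^ 2 + Real.pi ^ 2)⁻¹| ≤ (Real.pi ^ 2)⁻¹ := by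
        rw [abs_of_pos (inv_pos.mpr hd)]
        apply inv_anti₀ (by positivity)
        nlinarith [sq_nonneg (L - s)]
      have h2 : |(L ^ 2)⁻¹ + 2 * s * (L ^ 3)⁻¹| ≤ (L ^ 2)⁻¹ + 2 * x * (L ^ 3)⁻¹ := by
        calc |(L ^ 2)⁻¹ + 2 * s * (L ^ 3)⁻¹| ≤ |(L ^ 2)⁻¹| + |2 * s * (L ^ 3)⁻¹| := abs_add_le _ _
        _ = (L ^ 2)⁻¹ + 2 * x * (L ^ 3)⁻¹ := by
            rw [abs_of_pos (by positivity : (0:ℝ) < (L ^ 2)⁻¹), abs_mul, abs_mul,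
              abs_of_pos (by positivity : (0:ℝ) < (L ^ 3)⁻¹)]
            norm_num
            exact Or.inl hx_def.symm
      calc _ ≤ |((L - s) ^ 2 + Real.pi ^ 2)⁻¹| + |(L ^ 2)⁻¹ + 2 * s * (L ^ 3)⁻¹| := abs_sub _ _
      _ ≤ _ := add_le_add h1 h2
    refine hB.trans ?_
    rw [le_div_iff₀ (by positivity : (0:ℝ) < L ^ 4)]
    have e2 : (L ^ 2)⁻¹ * L ^ 4 = L ^ 2 := by
      rw [show L ^ 4 = L ^ 2 * L ^ 2 by ring, ← mul_assoc,
        inv_mul_cancel₀ (by positivity : (L ^ 2 : ℝ) ≠ 0), one_mul]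
    have e3 : (L ^ 3)⁻¹ * L ^ 4 = L := by
      rw [show L ^ 4 = L ^ 3 * L by ring, ← mul_assoc,
        inv_mul_cancel₀ (by positivity : (L ^ 3 : ℝ) ≠ 0), one_mul]
    have hid : ((Real.pi ^ 2)⁻¹ + ((L ^ 2)⁻¹ + 2 * x * (L ^ 3)⁻¹)) * L ^ 4
        = (Real.pi ^ 2)⁻¹ * L ^ 4 + L ^ 2 + 2 * x * L := by
      rw [add_mul, add_mul, e2, mul_assoc (2 * x), e3]
      ring
    rw [hid]
    have hL2x : L ≤ 2 * x := by linarith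
    have hL16 : L ^ 4 ≤ 16 * x ^ 4 := by nlinarith [pow_le_pow_left₀ hL0.le hL2x 4]
    have hπinv : (Real.pi ^ 2)⁻¹ ≤ 1 / 9 := by
      rw [inv_le_comm₀ (by positivity) (by norm_num)]
      linarith
    have h1 : (Real.pi ^ 2)⁻¹ * L ^ 4 ≤ (1 / 9) * (16 * x ^ 4) := by
      apply mul_le_mul hπinv hL16 (by positivity) (by norm_num)
    nlinarith [pow_nonneg hx 2, pow_nonneg hx 3, pow_nonneg hx 4]

noncomputable def Mconst : ℝ :=
  ∫ t in Ioi (0:ℝ), Real.exp (-t) * (t ^ (-(1/2):ℝ) + t ^ ((1/2):ℝ))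

lemma Mconst_nonneg : 0 ≤ Mconst := by
  apply setIntegral_nonneg measurableSet_Ioi
  intro t ht
  have ht' : (0:ℝ) < t := ht
  positivity

lemma integrableOn_g (L : ℝ) : IntegrableOn
    (fun t : ℝ => Real.exp (-t) * ((L ^ 2)⁻¹ + 2 * Real.log t * (L ^ 3)⁻¹)) (Ioi 0) := by
  have heq : (fun t : ℝ => Real.exp (-t) * ((L ^ 2)⁻¹ + 2 * Real.log t * (L ^ 3)⁻¹))
      = fun t => (L ^ 2)⁻¹ * Real.exp (-t) + (2 * (L ^ 3)⁻¹) * (Real.exp (-t) * Real.log t) := by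
    ext t; ring
  rw [heq]
  exact (integrableOn_exp_neg.const_mul _).add (integrableOn_exp_neg_mul_log.const_mul _)

lemma integral_g (L : ℝ) :
    ∫ t in Ioi (0:ℝ), Real.exp (-t) * ((L ^ 2)⁻¹ + 2 * Real.log t * (L ^ 3)⁻¹)
      = (L ^ 2)⁻¹ - 2 * Real.eulerMascheroniConstant * (L ^ 3)⁻¹ := by
  have heq : (fun t : ℝ => Real.exp (-t) * ((L ^ 2)⁻¹ + 2 * Real.log t * (L ^ 3)⁻¹))
      = fun t => (L ^ 2)⁻¹ * Real.exp (-t) + (2 * (L ^ 3)⁻¹) * (Real.exp (-t) * Real.log t) := by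
    ext t; ring
  rw [heq, integral_add (integrableOn_exp_neg.const_mul _)
    (integrableOn_exp_neg_mul_log.const_mul _), MeasureTheory.integral_const_mul, MeasureTheory.integral_const_mul,
    integral_exp_neg_Ioi_zero, integral_exp_neg_mul_log]
  ring

lemma main_est {L : ℝ} (hL : 2 ≤ L) :
    |(∫ t in Ioi (0:ℝ), Real.exp (-t) / ((Real.log t - L) ^ 2 + Real.pi ^ 2))
        - ((L ^ 2)⁻¹ - 2 * Real.eulerMascheroniConstant * (L ^ 3)⁻¹)|
      ≤ (600 * 52488 * Mconst + 1) / L ^ 4 := by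
  have hL0 : (0:ℝ) < L := by linarith
  have hL4 : (0:ℝ) < L ^ 4 := by positivity
  rw [← integral_g L, ← integral_sub (integrableOn_f L) (integrableOn_g L)]
  have hbound : ∀ᵐ t ∂(volume.restrict (Ioi (0:ℝ))),
      ‖Real.exp (-t) / ((Real.log t - L) ^ 2 + Real.pi ^ 2)
        - Real.exp (-t) * ((L ^ 2)⁻¹ + 2 * Real.log t * (L ^ 3)⁻¹)‖
      ≤ (600 * 52488 / L ^ 4) * (Real.exp (-t) * (t ^ (-(1/2):ℝ) + t ^ ((1/2):ℝ))) := by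
    filter_upwards [ae_restrict_mem measurableSet_Ioi] with t ht
    have ht' : (0:ℝ) < t := ht
    have hfac : Real.exp (-t) / ((Real.log t - L) ^ 2 + Real.pi ^ 2)
        - Real.exp (-t) * ((L ^ 2)⁻¹ + 2 * Real.log t * (L ^ 3)⁻¹)
        = Real.exp (-t) * (((L - Real.log t) ^ 2 + Real.pi ^ 2)⁻¹
            - ((L ^ 2)⁻¹ + 2 * Real.log t * (L ^ 3)⁻¹)) := by
      rw [show (Real.log t - L) ^ 2 = (L - Real.log t) ^ 2 by ring]
      ring
    rw [Real.norm_eq_abs, hfac, abs_mul, abs_of_nonneg (Real.exp_nonneg (-t))]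
    calc Real.exp (-t) * |((L - Real.log t) ^ 2 + Real.pi ^ 2)⁻¹
          - ((L ^ 2)⁻¹ + 2 * Real.log t * (L ^ 3)⁻¹)|
        ≤ Real.exp (-t) * (600 * (1 + |Real.log t|) ^ 4 / L ^ 4) :=
          mul_le_mul_of_nonneg_left (key_bound hL) (Real.exp_nonneg (-t))
      _ ≤ Real.exp (-t) * (600 * (52488 * (t ^ (-(1/2):ℝ) + t ^ ((1/2):ℝ))) / L ^ 4) := by
          apply mul_le_mul_of_nonneg_left ?_ (Real.exp_nonneg (-t))
          rw [div_le_div_iff_of_pos_right hL4]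
          have := one_add_abs_log_pow_four_le ht'
          nlinarith [pow_nonneg (abs_nonneg (Real.log t)) 4]
      _ = (600 * 52488 / L ^ 4) * (Real.exp (-t) * (t ^ (-(1/2):ℝ) + t ^ ((1/2):ℝ))) := by
          ring
  have hnorm := norm_integral_le_of_norm_le (integrableOn_H.const_mul (600 * 52488 / L ^ 4))
    hbound
  rw [Real.norm_eq_abs] at hnorm
  refine hnorm.trans ?_
  rw [MeasureTheory.integral_const_mul]
  calc (600 * 52488 / L ^ 4) * Mconst = (600 * 52488 * Mconst) / L ^ 4 := by ring
    _ ≤ (600 * 52488 * Mconst + 1) / L ^ 4 := by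
        rw [div_le_div_iff_of_pos_right hL4]
        linarith

noncomputable def W (lam : ℝ) : ℝ :=
  ∫ u in Set.Ioi (0 : ℝ), Real.exp (-lam * u) / ((Real.log u) ^ 2 + Real.pi ^ 2)

lemma lam_mul_W {lam : ℝ} (hlam : 0 < lam) :
    lam * W lam = ∫ t in Ioi (0:ℝ),
      Real.exp (-t) / ((Real.log t - Real.log lam) ^ 2 + Real.pi ^ 2) := by
  have hne := hlam.ne'
  have hsub : W lam = lam⁻¹ * ∫ t in Ioi (0:ℝ),
      Real.exp (-t) / ((Real.log (t / lam)) ^ 2 + Real.pi ^ 2) := by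
    rw [W]
    have hcomp : (fun u : ℝ => Real.exp (-lam * u) / ((Real.log u) ^ 2 + Real.pi ^ 2))
        = fun u => (fun t => Real.exp (-t) / ((Real.log (t / lam)) ^ 2 + Real.pi ^ 2))
            (lam * u) := by
      ext u
      simp only [mul_div_cancel_left₀ _ hne, neg_mul]
    have hci := integral_comp_mul_left_Ioi
      (fun t => Real.exp (-t) / ((Real.log (t / lam)) ^ 2 + Real.pi ^ 2)) 0 hlam
    rw [mul_zero] at hci
    rw [hcomp, hci, smul_eq_mul]
  rw [hsub, ← mul_assoc, mul_inv_cancel₀ hne, one_mul]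
  apply setIntegral_congr_fun measurableSet_Ioi
  intro t ht
  have ht' : (0:ℝ) < t := ht
  dsimp only
  rw [Real.log_div ht'.ne' hne]

theorem stmt15 :
    ∃ C > (0 : ℝ), ∃ lam₀ : ℝ, ∀ lam ≥ lam₀,
      |lam * W lam - ((Real.log lam) ^ 2)⁻¹
          + 2 * Real.eulerMascheroniConstant * ((Real.log lam) ^ 3)⁻¹|
        ≤ C * ((Real.log lam) ^ 4)⁻¹ := by
  refine ⟨600 * 52488 * Mconst + 1, by nlinarith [Mconst_nonneg], Real.exp 2, fun lam hlam => ?_⟩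
  have hlam0 : (0:ℝ) < lam := lt_of_lt_of_le (Real.exp_pos 2) hlam
  have hL : 2 ≤ Real.log lam := by
    rw [Real.le_log_iff_exp_le hlam0]
    exact hlam
  have h1 := main_est hL
  rw [lam_mul_W hlam0]
  rw [show (∫ t in Ioi (0:ℝ),
      Real.exp (-t) / ((Real.log t - Real.log lam) ^ 2 + Real.pi ^ 2))
      - ((Real.log lam) ^ 2)⁻¹
      + 2 * Real.eulerMascheroniConstant * ((Real.log lam) ^ 3)⁻¹
    = (∫ t in Ioi (0:ℝ),
      Real.exp (-t) / ((Real.log t - Real.log lam) ^ 2 + Real.pi ^ 2))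
      - (((Real.log lam) ^ 2)⁻¹
        - 2 * Real.eulerMascheroniConstant * ((Real.log lam) ^ 3)⁻¹) by ring]
  rw [show (600 * 52488 * Mconst + 1) * ((Real.log lam) ^ 4)⁻¹
    = (600 * 52488 * Mconst + 1) / (Real.log lam) ^ 4 by ring]
  exact h1
end
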